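/- Let M be a doubly invariant subspace of RL^2 with 1 ∉ M, and let q be the orthogonal projection of the constant function 1 onto M. Then q = |q|^2 almost everywhere on T; consequently q takes only the values 0 and 1 almost everywhere, i.e. q is the characteristic function of a measurable subset E of T. -/

import Mathlib

open MeasureTheory Complex

noncomputable section

instance : Fact (0 < 2 * Real.pi) := ⟨Real.two_pi_pos⟩

/-- The unit circle, modelled as `ℝ / 2πℤ`, with normalized Haar (Lebesgue) measure
of total mass `1`. -/
abbrev 𝕋 : Type := AddCircle (2 * Real.pi)

abbrev μT : Measure 𝕋 := AddCircle.haarAddCircle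

/-- `RL²`: the set of `f ∈ L²` all of whose Fourier coefficients are real. -/
def RL2 : Set (Lp ℂ 2 μT) :=
  {f | ∀ n : ℤ, (fourierCoeff (f : 𝕋 → ℂ) n).im = 0}

/-- The image `e^{iθ}·M` of a set `M ⊆ L²` under multiplication by the coordinate function. -/
def shiftSet (M : Set (Lp ℂ 2 μT)) : Set (Lp ℂ 2 μT) :=
  {g | ∃ f ∈ M, (g : 𝕋 → ℂ) =ᵐ[μT] fun t => fourier 1 t * (f : 𝕋 → ℂ) t}

/-- The constant function `1` as an element of `L²` of the circle. -/
def oneL2 : Lp ℂ 2 μT := (memLp_const (1 : ℂ)).toLp fun _ => (1 : ℂ)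

/-! Since `M` is doubly invariant, `e_n q` lies in `M` (up to a.e. equality) for every `n ∈ ℤ`,
so the orthogonality of `1 - q` to `M` says that every Fourier coefficient of the integrable
function `(1 - q) q̄` vanishes. By uniqueness of Fourier coefficients in `L¹` (a functional
`g ↦ ∫ g (1 - q) q̄` vanishing on trigonometric polynomials vanishes on `C(𝕋)` by
Stone–Weierstrass, and continuous functions approximate indicators of closed sets), this forces
`(1 - q) q̄ = 0` a.e., i.e. `q` takes only the values `0` and `1`. -/

open Filter Topology NNReal BoundedContinuousFunction

section TestFunctions

variable {X E : Type*} [TopologicalSpace X] [HasOuterApproxClosed X] [MeasurableSpace X]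
  [BorelSpace X] [NormedAddCommGroup E] [NormedSpace ℝ E] {μ : Measure X} {f : X → E}

theorem setIntegral_eq_zero_of_forall_integral_smul_eq_zero (hf : Integrable f μ)
    (h : ∀ g : X →ᵇ ℝ≥0, ∫ x, (g x : ℝ) • f x ∂μ = 0) {s : Set X} (hs : IsClosed s) :
    ∫ x in s, f x ∂μ = 0 := by
  have hlim : ∀ x, Tendsto (fun n => (hs.apprSeq n x : ℝ)) atTop
      (𝓝 (s.indicator (fun _ => (1 : ℝ)) x)) := by
    intro x
    have := (NNReal.continuous_coe.tendsto _).comp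
      (tendsto_pi_nhds.mp (HasOuterApproxClosed.tendsto_apprSeq hs) x)
    by_cases hx : x ∈ s <;> simpa [hx, Function.comp_def] using this
  have hDCT := tendsto_integral_of_dominated_convergence (μ := μ)
    (F := fun n x => (hs.apprSeq n x : ℝ) • f x) (fun x => ‖f x‖)
    (fun n => (NNReal.continuous_coe.comp (hs.apprSeq n).continuous).aestronglyMeasurable.smul
      hf.aestronglyMeasurable) hf.norm
    (fun n => Eventually.of_forall fun x => by
      simpa [norm_smul] using mul_le_of_le_one_left (norm_nonneg (f x))
        (HasOuterApproxClosed.apprSeq_apply_le_one hs n x))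
    (Eventually.of_forall fun x => (hlim x).smul_const (f x))
  have hind : (fun x => s.indicator (fun _ => (1 : ℝ)) x • f x) = s.indicator f := by
    ext x; by_cases hx : x ∈ s <;> simp [hx]
  simp only [h, hind, integral_indicator hs.measurableSet] at hDCT
  exact tendsto_nhds_unique hDCT tendsto_const_nhds

variable [CompleteSpace E]

theorem ae_eq_zero_of_forall_integral_smul_eq_zero (hf : Integrable f μ)
    (h : ∀ g : X →ᵇ ℝ≥0, ∫ x, (g x : ℝ) • f x ∂μ = 0) : f =ᵐ[μ] 0 :=
  ae_eq_zero_of_forall_setIntegral_isClosed_eq_zero hf fun _ hs =>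
    setIntegral_eq_zero_of_forall_integral_smul_eq_zero hf h hs

end TestFunctions

section IntegralAgainst

variable {X E : Type*} [TopologicalSpace X] [CompactSpace X] [MeasurableSpace X]
  [OpensMeasurableSpace X] [NormedAddCommGroup E] [NormedSpace ℂ E] {μ : Measure X} {f : X → E}

theorem MeasureTheory.Integrable.continuousMap_smul (hf : Integrable f μ) (g : C(X, ℂ)) :
    Integrable (fun x => g x • f x) μ :=
  hf.bdd_smul ‖g‖ g.continuous.aestronglyMeasurable (Eventually.of_forall g.norm_coe_le_norm)

def integralSmulCLM (hf : Integrable f μ) : C(X, ℂ) →L[ℂ] E :=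
  LinearMap.mkContinuous
    { toFun := fun g => ∫ x, g x • f x ∂μ
      map_add' := fun g h => by
        simp only [ContinuousMap.add_apply, add_smul]
        exact integral_add (hf.continuousMap_smul g) (hf.continuousMap_smul h)
      map_smul' := fun c g => by
        simp only [ContinuousMap.smul_apply, smul_eq_mul, mul_smul, RingHom.id_apply]
        exact integral_smul c _ }
    (∫ x, ‖f x‖ ∂μ) fun g => by
      calc ‖∫ x, g x • f x ∂μ‖ ≤ ∫ x, ‖g‖ * ‖f x‖ ∂μ :=
            norm_integral_le_of_norm_le (hf.norm.const_mul _) (Eventually.of_forall fun x => by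
              rw [norm_smul]; gcongr; exact g.norm_coe_le_norm x)
        _ = (∫ x, ‖f x‖ ∂μ) * ‖g‖ := by rw [integral_const_mul, mul_comm]

end IntegralAgainst

theorem AddCircle.ae_eq_zero_of_fourierCoeff_eq_zero {T : ℝ} [Fact (0 < T)]
    {E : Type*} [NormedAddCommGroup E] [NormedSpace ℂ E] [CompleteSpace E]
    {f : AddCircle T → E} (hf : Integrable f haarAddCircle) (h : ∀ n, fourierCoeff f n = 0) :
    f =ᵐ[haarAddCircle] 0 := by
  have hspan : Submodule.span ℂ (Set.range fourier) ≤ (integralSmulCLM hf).ker := by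
    rw [Submodule.span_le]
    rintro _ ⟨n, rfl⟩
    simpa [integralSmulCLM, fourierCoeff] using h (-n)
  have hker : ∀ g, integralSmulCLM hf g = 0 := fun g =>
    Submodule.topologicalClosure_minimal _ hspan (integralSmulCLM hf).isClosed_ker
      (by rw [span_fourier_closure_eq_top]; trivial)
  refine ae_eq_zero_of_forall_integral_smul_eq_zero hf fun g => ?_
  -- the `ℝ`-action on `E` is the restriction of the `ℂ`-action, so the integrands agree
  exact hker ⟨fun x => ((g x : ℝ) : ℂ), by fun_prop⟩

theorem MeasureTheory.MemLp.fourier_mul {T : ℝ} {p : ENNReal} {μ : Measure (AddCircle T)}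
    {f : AddCircle T → ℂ} (hf : MemLp f p μ) (n : ℤ) :
    MemLp (fun t => fourier n t * f t) p μ :=
  hf.of_le ((map_continuous (fourier n)).aestronglyMeasurable.mul hf.aestronglyMeasurable)
    (Eventually.of_forall fun t => by simp [Circle.norm_coe])

section ShiftInvariant

variable {S : Set (Lp ℂ 2 μT)} (hS : shiftSet S = S)
include hS

theorem exists_mem_ae_eq_fourier_one_mul {f : Lp ℂ 2 μT} (hf : f ∈ S) :
    ∃ g ∈ S, (g : 𝕋 → ℂ) =ᵐ[μT] fun t => fourier 1 t * f t := by
  have hmem := (Lp.memLp f).fourier_mul 1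
  exact ⟨hmem.toLp _, hS ▸ ⟨f, hf, hmem.coeFn_toLp⟩, hmem.coeFn_toLp⟩

theorem exists_mem_ae_eq_fourier_neg_one_mul {f : Lp ℂ 2 μT} (hf : f ∈ S) :
    ∃ g ∈ S, (g : 𝕋 → ℂ) =ᵐ[μT] fun t => fourier (-1) t * f t := by
  obtain ⟨g, hg, hfg⟩ : f ∈ shiftSet S := by rwa [hS]
  refine ⟨g, hg, ?_⟩
  filter_upwards [hfg] with t ht
  rw [ht, ← mul_assoc, ← fourier_add, neg_add_cancel, fourier_zero, one_mul]

theorem exists_mem_ae_eq_fourier_mul {f : Lp ℂ 2 μT} (hf : f ∈ S) (n : ℤ) :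
    ∃ g ∈ S, (g : 𝕋 → ℂ) =ᵐ[μT] fun t => fourier n t * f t := by
  induction n using Int.induction_on with
  | zero => exact ⟨f, hf, Eventually.of_forall fun t => by simp⟩
  | succ k ih =>
    obtain ⟨g, hg, hgf⟩ := ih
    obtain ⟨g', hg', hg'g⟩ := exists_mem_ae_eq_fourier_one_mul hS hg
    refine ⟨g', hg', ?_⟩
    filter_upwards [hg'g, hgf] with t h1 h2
    rw [h1, h2, ← mul_assoc, ← fourier_add, add_comm]
  | pred k ih =>
    obtain ⟨g, hg, hgf⟩ := ih
    obtain ⟨g', hg', hg'g⟩ := exists_mem_ae_eq_fourier_neg_one_mul hS hg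
    refine ⟨g', hg', ?_⟩
    filter_upwards [hg'g, hgf] with t h1 h2
    rw [h1, h2, ← mul_assoc, ← fourier_add, neg_add_eq_sub]

end ShiftInvariant

theorem Complex.eq_zero_or_eq_one_of_one_sub_mul_conj_eq_zero {z : ℂ}
    (h : (1 - z) * starRingEnd ℂ z = 0) : z = 0 ∨ z = 1 := by
  rcases mul_eq_zero.mp h with h | h
  · exact Or.inr (sub_eq_zero.mp h).symm
  · exact Or.inl (map_eq_zero _ |>.mp h)

theorem projection_is_indicator_general
    (M : Submodule ℝ (Lp ℂ 2 μT))
    (hMinv : shiftSet (M : Set (Lp ℂ 2 μT)) = (M : Set (Lp ℂ 2 μT)))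
    (q : Lp ℂ 2 μT) (hqM : q ∈ M)
    (hqproj : ∀ g ∈ M,
      ∫ t, ((1 : ℂ) - (q : 𝕋 → ℂ) t) * starRingEnd ℂ ((g : 𝕋 → ℂ) t) ∂μT = 0) :
    ((q : 𝕋 → ℂ) =ᵐ[μT] fun t => ((‖(q : 𝕋 → ℂ) t‖ : ℝ) : ℂ)^2) ∧
    ∃ E : Set 𝕋, MeasurableSet E ∧
      (q : 𝕋 → ℂ) =ᵐ[μT] E.indicator (fun _ => (1 : ℂ)) := by
  set F : 𝕋 → ℂ := fun t => (1 - q t) * starRingEnd ℂ (q t)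
  have hF : Integrable F μT :=
    ((memLp_const 1).sub (Lp.memLp q)).integrable_mul (Lp.memLp q).star
  have hFcoeff : ∀ n, fourierCoeff F n = 0 := fun n => by
    obtain ⟨g, hg, hgq⟩ := exists_mem_ae_eq_fourier_mul hMinv hqM n
    rw [← hqproj g hg, fourierCoeff]
    refine integral_congr_ae ?_
    filter_upwards [hgq] with t ht
    simp only [F, ht, map_mul, ← fourier_neg, smul_eq_mul]
    ring
  have hq01 : ∀ᵐ t ∂μT, q t = 0 ∨ q t = 1 := by
    filter_upwards [AddCircle.ae_eq_zero_of_fourierCoeff_eq_zero hF hFcoeff] with t ht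
    exact Complex.eq_zero_or_eq_one_of_one_sub_mul_conj_eq_zero ht
  refine ⟨?_, q ⁻¹' {1}, (Lp.stronglyMeasurable q).measurable (measurableSet_singleton 1), ?_⟩ <;>
    filter_upwards [hq01] with t ht <;> rcases ht with ht | ht <;> simp [ht]

/-- Let `M` be a doubly invariant subspace of `RL²` with `1 ∉ M`, and let `q` be the
orthogonal projection of the constant function `1` onto `M` (i.e. `q ∈ M` and `1 - q` is
orthogonal to `M`).  Then `q = |q|²` almost everywhere; consequently `q` takes only the
values `0` and `1` almost everywhere, i.e. `q` is the characteristic function of a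
measurable subset `E` of the circle. -/
theorem projection_is_indicator
    (M : Submodule ℝ (Lp ℂ 2 μT))
    (hMsub : (M : Set (Lp ℂ 2 μT)) ⊆ RL2)
    (hMclosed : IsClosed (M : Set (Lp ℂ 2 μT)))
    (hMinv : shiftSet (M : Set (Lp ℂ 2 μT)) = (M : Set (Lp ℂ 2 μT)))
    (hone : oneL2 ∉ M)
    (q : Lp ℂ 2 μT) (hqM : q ∈ M)
    (hqproj : ∀ g ∈ M,
      ∫ t, ((1 : ℂ) - (q : 𝕋 → ℂ) t) * starRingEnd ℂ ((g : 𝕋 → ℂ) t) ∂μT = 0) :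
    ((q : 𝕋 → ℂ) =ᵐ[μT] fun t => ((‖(q : 𝕋 → ℂ) t‖ : ℝ) : ℂ)^2) ∧
    ∃ E : Set 𝕋, MeasurableSet E ∧
      (q : 𝕋 → ℂ) =ᵐ[μT] E.indicator (fun _ => (1 : ℂ)) :=
  projection_is_indicator_general M hMinv q hqM hqproj
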